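/- Let D=(N,A,s,t) be an acyclic network and let a, b be arcs of the reduction Ã such that the inequalities x(a)≥0 and x(b)≥0 define facets F_a and F_b of the flow polytope F(D). Then F_a = F_b if and only if a and b belong to the same corridor of D. -/

import Mathlib

open scoped Classical

variable {V : Type*} [Fintype V] [DecidableEq V]

/-- A directed graph (arc set `A`) is acyclic: no directed cycle. -/
def Acyclic (A : Finset (V × V)) : Prop :=
  ∀ v : V, ¬ Relation.TransGen (fun u w => (u, w) ∈ A) v v

/-- Sum of `x` over the arcs of `A` with tail `v`. -/
noncomputable def outSum (A : Finset (V × V)) (x : V × V → ℝ) (v : V) : ℝ :=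
  ∑ a ∈ A.filter (fun a => a.1 = v), x a

/-- Sum of `x` over the arcs of `A` with head `v`. -/
noncomputable def inSum (A : Finset (V × V)) (x : V × V → ℝ) (v : V) : ℝ :=
  ∑ a ∈ A.filter (fun a => a.2 = v), x a

/-- A flow of value 1 in the network `(V, A, s, t)`. -/
def IsFlow (A : Finset (V × V)) (s t : V) (x : V × V → ℝ) : Prop :=
  (∀ a, a ∉ A → x a = 0) ∧ (∀ a, 0 ≤ x a) ∧
    (∀ v, v ≠ s → v ≠ t → outSum A x v = inSum A x v) ∧
    outSum A x s - inSum A x s = 1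

/-- The flow polytope: all value-1 flows, as a subset of `ℝ^(V × V)`. -/
def flowPolytope (A : Finset (V × V)) (s t : V) : Set ((V × V) → ℝ) :=
  {x | IsFlow A s t x}

/-- An `s`–`t` path, given by its list of nodes. -/
def IsPath (A : Finset (V × V)) (s t : V) (p : List V) : Prop :=
  p.Chain' (fun u v => (u, v) ∈ A) ∧ p.head? = some s ∧ p.getLast? = some t ∧ p.Nodup

/-- The arcs of a path given by its node list. -/
def pathEdges (p : List V) : List (V × V) := p.zip p.tail

/-- Characteristic vector of (the arc set of) a path. -/
def chi (p : List V) : (V × V) → ℝ := fun a => if a ∈ pathEdges p then 1 else 0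

/-- Arcs lying on at least one `s`–`t` path (the arc set of the reduced network). -/
noncomputable def redArcs (A : Finset (V × V)) (s t : V) : Finset (V × V) :=
  A.filter fun a => ∃ p : List V, IsPath A s t p ∧ a ∈ pathEdges p

/-- Nodes incident to an arc of the reduced network. -/
noncomputable def redNodes (A : Finset (V × V)) (s t : V) : Finset V :=
  (redArcs A s t).image Prod.fst ∪ (redArcs A s t).image Prod.snd

/-- Out-degree in the reduced network. -/
noncomputable def dplus (A : Finset (V × V)) (s t : V) (u : V) : ℕ :=
  ((redArcs A s t).filter fun a => a.1 = u).card

/-- In-degree in the reduced network. -/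
noncomputable def dminus (A : Finset (V × V)) (s t : V) (u : V) : ℕ :=
  ((redArcs A s t).filter fun a => a.2 = u).card

/-- A corridor: a maximal path of the reduced network all of whose internal nodes
have in- and out-degree 1 in the reduced network. -/
def IsCorridor (A : Finset (V × V)) (s t : V) (c : List V) : Prop :=
  2 ≤ c.length ∧ c.Chain' (fun u v => (u, v) ∈ redArcs A s t) ∧
    (∀ v ∈ c.tail.dropLast, dminus A s t v = 1 ∧ dplus A s t v = 1) ∧
    (∀ h, c.head? = some h → dminus A s t h ≠ 1 ∨ dplus A s t h ≠ 1) ∧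
    (∀ z, c.getLast? = some z → dminus A s t z ≠ 1 ∨ dplus A s t z ≠ 1)

/-- A good corridor. -/
def IsGoodCorridor (A : Finset (V × V)) (s t : V) (c : List V) : Prop :=
  IsCorridor A s t c ∧ (∀ h, c.head? = some h → 2 ≤ dplus A s t h) ∧
    (∀ z, c.getLast? = some z → 2 ≤ dminus A s t z)

/-- A good arc: an arc belonging to some good corridor. -/
def IsGoodArc (A : Finset (V × V)) (s t : V) (a : V × V) : Prop :=
  ∃ c, IsGoodCorridor A s t c ∧ a ∈ pathEdges c

/-- Two vertices of a polytope `S` are adjacent when the segment joining them is a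
(one-dimensional) face of `S`, i.e. an exposed face. -/
def AdjacentVerts (S : Set ((V × V) → ℝ)) (x y : (V × V) → ℝ) : Prop :=
  x ≠ y ∧ IsExposed ℝ S (segment ℝ x y)

/-- A facet: a proper maximal (exposed) face. -/
def IsFacetOf (S F : Set ((V × V) → ℝ)) : Prop :=
  IsExposed ℝ S F ∧ F ≠ S ∧ ∀ G, IsExposed ℝ S G → G ≠ S → F ⊆ G → G = F

/-!
Every flow is supported on the reduced network (a positive arc can be continued, by conservation
and acyclicity, back to `s` and on to `t`). Hence a flow is constant along a corridor, whose
internal nodes have a single reduced in-arc and out-arc, so arcs of one corridor have the same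
face.

Conversely let `F_a = F_b`. The indicator vector of an `s`–`t` path through `a` lies in `F(D)` but
not in `F_a`, so every such path also passes through `b`; say `b` comes after `a` on the path `p`.
Walk along `p` from `a` towards `b`, through arcs `f` with `F_f = F_b`. At the head `v` of `f`,
splicing any path through another reduced in-arc of `v` with the rest of `p` gives a path through
`b` but not through `f`, so `f` is the only reduced in-arc of `v`. Then flow conservation at `v`
gives `F_f ⊆ F_e` for every reduced out-arc `e` of `v`, and since `F_b` is a facet, `F_e = F_b`.
Now a path through one out-arc of `v` contains all of them, so `v` has exactly one. The part of `p`
from `a` to `b` thus has only nodes of in- and out-degree one inside, and it extends to a corridor.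
-/

open List Relation

section PathEdges

variable {α : Type*}

@[simp] lemma pathEdges_nil : pathEdges ([] : List α) = [] := rfl

@[simp] lemma pathEdges_singleton (v : α) : pathEdges [v] = [] := rfl

@[simp] lemma pathEdges_cons_cons (u v : α) (l : List α) :
    pathEdges (u :: v :: l) = (u, v) :: pathEdges (v :: l) := rfl

lemma map_fst_pathEdges : ∀ p : List α, (pathEdges p).map Prod.fst = p.dropLast
  | [] | [_] => rfl
  | u :: v :: l => by simp [map_fst_pathEdges (v :: l)]

lemma map_snd_pathEdges (p : List α) : (pathEdges p).map Prod.snd = p.tail :=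
  map_snd_zip (by simp)

lemma mem_pathEdges_iff {e : α × α} {p : List α} :
    e ∈ pathEdges p ↔ ∃ xs ys, p = xs ++ e.1 :: e.2 :: ys := by
  match p with
  | [] => simp
  | [_] =>
    simp only [pathEdges_singleton, not_mem_nil, false_iff, not_exists]
    intro xs ys h
    have := congrArg length h
    simp at this
    omega
  | u :: v :: l =>
    rw [pathEdges_cons_cons, mem_cons, mem_pathEdges_iff]
    constructor
    · rintro (rfl | ⟨xs, ys, h⟩)
      · exact ⟨[], l, rfl⟩
      · exact ⟨u :: xs, ys, by simp [h]⟩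
    · rintro ⟨_ | ⟨x, xs⟩, ys, h⟩
      · simp_all
      · simp only [cons_append, cons.injEq] at h
        exact Or.inr ⟨xs, ys, h.2⟩

lemma List.IsInfix.pathEdges_subset {l₁ l₂ : List α} (h : l₁ <:+: l₂) :
    pathEdges l₁ ⊆ pathEdges l₂ := by
  obtain ⟨a, b, rfl⟩ := h
  intro e he
  obtain ⟨xs, ys, rfl⟩ := mem_pathEdges_iff.1 he
  exact mem_pathEdges_iff.2 ⟨a ++ xs, ys ++ b, by simp⟩

lemma isChain_iff_forall_mem_pathEdges {R : α → α → Prop} :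
    ∀ {l : List α}, l.IsChain R ↔ ∀ e ∈ pathEdges l, R e.1 e.2
  | [] | [_] => by simp
  | u :: v :: l => by simp [isChain_iff_forall_mem_pathEdges (l := v :: l)]

lemma List.Nodup.eq_of_mem_pathEdges_of_fst_eq {p : List α} (hp : p.Nodup) {e e' : α × α}
    (he : e ∈ pathEdges p) (he' : e' ∈ pathEdges p) (h : e.1 = e'.1) : e = e' :=
  inj_on_of_nodup_map (by rw [map_fst_pathEdges]; exact hp.sublist (dropLast_sublist p)) he he' h

lemma List.Nodup.eq_of_mem_pathEdges_of_snd_eq {p : List α} (hp : p.Nodup) {e e' : α × α}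
    (he : e ∈ pathEdges p) (he' : e' ∈ pathEdges p) (h : e.2 = e'.2) : e = e' :=
  inj_on_of_nodup_map (by rw [map_snd_pathEdges]; exact hp.sublist (tail_sublist p)) he he' h

def PrecedesOn (p : List α) (e e' : α × α) : Prop :=
  ∃ xs ys, p = xs ++ e.1 :: e.2 :: ys ∧ e' ∈ pathEdges (e.2 :: ys)

lemma precedesOn_or_eq_or_precedesOn {p : List α} {e e' : α × α} (he : e ∈ pathEdges p)
    (he' : e' ∈ pathEdges p) : PrecedesOn p e e' ∨ e = e' ∨ PrecedesOn p e' e := by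
  match p with
  | [] | [_] => simp at he
  | u :: v :: l =>
    rw [pathEdges_cons_cons, mem_cons] at he he'
    rcases he with rfl | he <;> rcases he' with rfl | he'
    · exact Or.inr (Or.inl rfl)
    · exact Or.inl ⟨[], l, rfl, he'⟩
    · exact Or.inr (Or.inr ⟨[], l, rfl, he⟩)
    · rcases precedesOn_or_eq_or_precedesOn he he' with
        ⟨xs, ys, h, h'⟩ | h | ⟨xs, ys, h, h'⟩
      · exact Or.inl ⟨u :: xs, ys, by simp [h], h'⟩
      · exact Or.inr (Or.inl h)
      · exact Or.inr (Or.inr ⟨u :: xs, ys, by simp [h], h'⟩)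

end PathEdges

section Network

variable {N : Type*} {A : Finset (N × N)} {s t : N}

lemma IsPath.mem_of_mem_pathEdges {p : List N} (hp : IsPath A s t p) {e : N × N}
    (he : e ∈ pathEdges p) : e ∈ A :=
  isChain_iff_forall_mem_pathEdges.1 hp.1 e he

lemma IsPath.nodup_pathEdges {p : List N} (hp : IsPath A s t p) : (pathEdges p).Nodup :=
  Nodup.of_map Prod.snd (by rw [map_snd_pathEdges]; exact hp.2.2.2.sublist (tail_sublist p))

lemma IsPath.snd_ne_source {p : List N} (hp : IsPath A s t p) {e : N × N}
    (he : e ∈ pathEdges p) : e.2 ≠ s := by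
  obtain ⟨-, hs, -, hnd⟩ := hp
  have htail : e.2 ∈ p.tail := map_snd_pathEdges p ▸ mem_map_of_mem he
  cases p with
  | nil => simp at hs
  | cons x r =>
    obtain rfl : x = s := by simpa using hs
    rintro rfl
    exact (nodup_cons.1 hnd).1 htail

lemma IsPath.fst_ne_target {p : List N} (hp : IsPath A s t p) {e : N × N}
    (he : e ∈ pathEdges p) : e.1 ≠ t := by
  have hdrop : e.1 ∈ p.dropLast := map_fst_pathEdges p ▸ mem_map_of_mem he
  have hnd := hp.2.2.2
  rw [← dropLast_append_getLast? t hp.2.2.1, nodup_append] at hnd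
  exact hnd.2.2 _ hdrop _ (mem_singleton_self t)

lemma IsPath.mem_redArcs {p : List N} (hp : IsPath A s t p) {e : N × N}
    (he : e ∈ pathEdges p) : e ∈ redArcs A s t :=
  Finset.mem_filter.2 ⟨hp.mem_of_mem_pathEdges he, p, hp, he⟩

lemma snd_ne_source_of_mem_redArcs {e : N × N} (he : e ∈ redArcs A s t) : e.2 ≠ s := by
  obtain ⟨-, p, hp, hep⟩ := Finset.mem_filter.1 he
  exact hp.snd_ne_source hep

lemma fst_ne_target_of_mem_redArcs {e : N × N} (he : e ∈ redArcs A s t) : e.1 ≠ t := by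
  obtain ⟨-, p, hp, hep⟩ := Finset.mem_filter.1 he
  exact hp.fst_ne_target hep

lemma source_ne_target_of_mem_redArcs {e : N × N} (he : e ∈ redArcs A s t) : s ≠ t := by
  obtain ⟨-, p, ⟨-, hs, ht, hnd⟩, hep⟩ := Finset.mem_filter.1 he
  match p, hep with
  | x :: y :: r, _ =>
    obtain rfl : x = s := by simpa using hs
    rw [getLast?_cons_cons] at ht
    rintro rfl
    exact (nodup_cons.1 hnd).1 (mem_of_getLast? ht)

lemma Acyclic.nodup_of_isChain (hA : Acyclic A) {l : List N}
    (hl : l.IsChain fun u w => (u, w) ∈ A) : l.Nodup :=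
  haveI : Std.Irrefl (TransGen fun u w => (u, w) ∈ A) := ⟨hA⟩
  (hl.imp (S := TransGen fun u w => (u, w) ∈ A) fun _ _ => .single).pairwise.nodup

lemma Acyclic.wellFounded [Finite N] (hA : Acyclic A) :
    WellFounded (TransGen fun u w => (u, w) ∈ A) :=
  haveI : Std.Irrefl (TransGen fun u w => (u, w) ∈ A) := ⟨hA⟩
  Finite.wellFounded_of_trans_of_irrefl _

lemma Acyclic.wellFounded_flip [Finite N] (hA : Acyclic A) :
    WellFounded (flip (TransGen fun u w => (u, w) ∈ A)) :=
  haveI : Std.Irrefl (flip (TransGen fun u w => (u, w) ∈ A)) := ⟨hA⟩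
  haveI : IsTrans N (flip (TransGen fun u w => (u, w) ∈ A)) :=
    ⟨fun _ _ _ h₁ h₂ => h₂.trans h₁⟩
  Finite.wellFounded_of_trans_of_irrefl _

lemma isPath_append (hA : Acyclic A) {xs ys : List N} {u v : N}
    (h₁ : (xs ++ [u]).IsChain fun u w => (u, w) ∈ A)
    (h₂ : (v :: ys).IsChain fun u w => (u, w) ∈ A)
    (huv : (u, v) ∈ A) (hs : (xs ++ [u]).head? = some s) (ht : (v :: ys).getLast? = some t) :
    IsPath A s t (xs ++ u :: v :: ys) := by
  have hc : (xs ++ u :: v :: ys).IsChain fun u w => (u, w) ∈ A := by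
    have := h₁.append h₂ (by simp [huv])
    simpa using this
  refine ⟨hc, ?_, ?_, hA.nodup_of_isChain hc⟩
  · cases xs <;> simp_all
  · simp_all [getLast?_append]

lemma mem_redArcs_of_reflTransGen (hA : Acyclic A) {e : N × N} (he : e ∈ A)
    (hs : ReflTransGen (fun u w => (u, w) ∈ A) s e.1)
    (ht : ReflTransGen (fun u w => (u, w) ∈ A) e.2 t) : e ∈ redArcs A s t := by
  obtain ⟨l₁, hc₁, hl₁⟩ := exists_isChain_cons_of_relationReflTransGen hs
  obtain ⟨l₂, hc₂, hl₂⟩ := exists_isChain_cons_of_relationReflTransGen ht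
  have hsplit : (s :: l₁).dropLast ++ [e.1] = s :: l₁ := by
    rw [← hl₁, dropLast_append_getLast]
  refine Finset.mem_filter.2 ⟨he, _, isPath_append hA (hsplit ▸ hc₁) hc₂ he ?_ ?_,
    mem_pathEdges_iff.2 ⟨_, _, rfl⟩⟩
  · rw [hsplit]; rfl
  · rw [getLast?_eq_some_getLast (cons_ne_nil _ _), hl₂]

variable [DecidableEq N] {x : N × N → ℝ}

lemma sum_filter_chi {p : List N} (hsub : ∀ e ∈ pathEdges p, e ∈ A)
    (hnd : (pathEdges p).Nodup) (f : N × N → N) (v : N) :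
    ∑ a ∈ A.filter (fun a => f a = v), chi p a = ((pathEdges p).map f).count v := by
  simp only [chi, Finset.sum_boole]
  rw [List.count_eq_countP, List.countP_map, List.countP_eq_length_filter,
    ← List.toFinset_card_of_nodup (hnd.filter _)]
  congr 2
  ext a
  simp only [Finset.mem_filter, List.mem_toFinset, List.mem_filter, Function.comp_apply, beq_iff_eq]
  have := hsub a
  tauto

lemma IsPath.count_eq_count_tail_add {p : List N} (hp : IsPath A s t p) (v : N) :
    p.count v = p.tail.count v + if s = v then 1 else 0 := by
  obtain ⟨_, hs, -, -⟩ := hp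
  cases p with
  | nil => simp at hs
  | cons x r => simp_all [count_cons]

lemma IsPath.count_eq_count_dropLast_add {p : List N} (hp : IsPath A s t p) (v : N) :
    p.count v = p.dropLast.count v + if t = v then 1 else 0 := by
  conv_lhs => rw [← dropLast_append_getLast? t hp.2.2.1]
  simp [count_append, count_singleton]

lemma IsPath.outSum_chi {p : List N} (hp : IsPath A s t p) (v : N) :
    outSum A (chi p) v = p.dropLast.count v := by
  rw [outSum, sum_filter_chi (fun _ => hp.mem_of_mem_pathEdges) hp.nodup_pathEdges,
    map_fst_pathEdges]

lemma IsPath.inSum_chi {p : List N} (hp : IsPath A s t p) (v : N) :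
    inSum A (chi p) v = p.tail.count v := by
  rw [inSum, sum_filter_chi (fun _ => hp.mem_of_mem_pathEdges) hp.nodup_pathEdges,
    map_snd_pathEdges]

lemma IsPath.chi_mem_flowPolytope {p : List N} (hp : IsPath A s t p) (hst : s ≠ t) :
    chi p ∈ flowPolytope A s t := by
  refine ⟨fun a ha => if_neg fun hap => ha (hp.mem_of_mem_pathEdges hap), fun a => ?_,
    fun v hvs hvt => ?_, ?_⟩
  · unfold chi; split_ifs <;> norm_num
  · have h₁ := hp.count_eq_count_tail_add v
    have h₂ := hp.count_eq_count_dropLast_add v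
    rw [if_neg (Ne.symm hvs)] at h₁
    rw [if_neg (Ne.symm hvt)] at h₂
    rw [hp.outSum_chi, hp.inSum_chi]
    exact_mod_cast (by omega : p.dropLast.count v = p.tail.count v)
  · have h₁ := hp.count_eq_count_tail_add s
    have h₂ := hp.count_eq_count_dropLast_add s
    rw [if_pos rfl] at h₁
    rw [if_neg hst.symm] at h₂
    rw [hp.outSum_chi, hp.inSum_chi, sub_eq_iff_eq_add']
    exact_mod_cast (by omega : p.dropLast.count s = p.tail.count s + 1)

lemma IsFlow.le_outSum (hx : IsFlow A s t x) {e : N × N} (he : e ∈ A) :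
    x e ≤ outSum A x e.1 :=
  Finset.single_le_sum (fun a _ => hx.2.1 a) (Finset.mem_filter.2 ⟨he, rfl⟩)

lemma IsFlow.le_inSum (hx : IsFlow A s t x) {e : N × N} (he : e ∈ A) :
    x e ≤ inSum A x e.2 :=
  Finset.single_le_sum (fun a _ => hx.2.1 a) (Finset.mem_filter.2 ⟨he, rfl⟩)

lemma exists_pos_of_outSum_pos {v : N} (h : 0 < outSum A x v) :
    ∃ w, (v, w) ∈ A ∧ 0 < x (v, w) := by
  obtain ⟨e, he, hpos⟩ : ∃ e ∈ A.filter (fun a => a.1 = v), 0 < x e := by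
    by_contra! hle
    exact h.not_ge (Finset.sum_nonpos hle)
  obtain ⟨heA, rfl⟩ := Finset.mem_filter.1 he
  exact ⟨e.2, heA, hpos⟩

lemma exists_pos_of_inSum_pos {v : N} (h : 0 < inSum A x v) :
    ∃ u, (u, v) ∈ A ∧ 0 < x (u, v) := by
  obtain ⟨e, he, hpos⟩ : ∃ e ∈ A.filter (fun a => a.2 = v), 0 < x e := by
    by_contra! hle
    exact h.not_ge (Finset.sum_nonpos hle)
  obtain ⟨heA, rfl⟩ := Finset.mem_filter.1 he
  exact ⟨e.1, heA, hpos⟩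

lemma IsFlow.reflTransGen_target [Finite N] (hA : Acyclic A) (hx : IsFlow A s t x) {v : N}
    (hv : 0 < inSum A x v) : ReflTransGen (fun u w => (u, w) ∈ A) v t := by
  induction v using hA.wellFounded_flip.induction with
  | _ v ih =>
  by_cases hvt : v = t
  · exact hvt ▸ .refl
  have hout : 0 < outSum A x v := by
    by_cases hvs : v = s
    · subst hvs
      linarith [hx.2.2.2]
    · rwa [hx.2.2.1 v hvs hvt]
  obtain ⟨w, hvw, hpos⟩ := exists_pos_of_outSum_pos hout
  exact .head hvw (ih w (.single hvw) (hpos.trans_le (hx.le_inSum hvw)))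

lemma IsFlow.reflTransGen_source [Finite N] (hA : Acyclic A) (hx : IsFlow A s t x) {v : N}
    (hv : 0 < outSum A x v) : ReflTransGen (fun u w => (u, w) ∈ A) s v := by
  induction v using hA.wellFounded.induction with
  | _ v ih =>
  by_cases hvs : v = s
  · exact hvs ▸ .refl
  obtain ⟨w, hvw, hpos⟩ := exists_pos_of_outSum_pos hv
  have hvt : v ≠ t := by
    rintro rfl
    exact hA _ (.head' hvw (hx.reflTransGen_target hA (hpos.trans_le (hx.le_inSum hvw))))
  obtain ⟨u, huv, hpos'⟩ := exists_pos_of_inSum_pos (hx.2.2.1 v hvs hvt ▸ hv)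
  exact .tail (ih u (.single huv) (hpos'.trans_le (hx.le_outSum huv))) huv

lemma IsFlow.mem_redArcs [Finite N] (hA : Acyclic A) (hx : IsFlow A s t x) {e : N × N}
    (he : 0 < x e) : e ∈ redArcs A s t := by
  have heA : e ∈ A := by_contra fun h => he.ne' (hx.1 e h)
  exact mem_redArcs_of_reflTransGen hA heA
    (hx.reflTransGen_source hA (he.trans_le (hx.le_outSum heA)))
    (hx.reflTransGen_target hA (he.trans_le (hx.le_inSum heA)))

lemma dminus_eq_one_iff {v : N} : dminus A s t v = 1 ↔
    ∃ f ∈ redArcs A s t, f.2 = v ∧ ∀ e ∈ redArcs A s t, e.2 = v → e = f := by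
  simp [dminus, Finset.card_eq_one, Finset.eq_singleton_iff_unique_mem]

lemma dplus_eq_one_iff {v : N} : dplus A s t v = 1 ↔
    ∃ f ∈ redArcs A s t, f.1 = v ∧ ∀ e ∈ redArcs A s t, e.1 = v → e = f := by
  simp [dplus, Finset.card_eq_one, Finset.eq_singleton_iff_unique_mem]

lemma IsFlow.inSum_eq_of_dminus_eq_one [Finite N] (hA : Acyclic A) (hx : IsFlow A s t x)
    {f : N × N} (hf : f ∈ redArcs A s t) (h : dminus A s t f.2 = 1) : inSum A x f.2 = x f := by
  obtain ⟨g, -, -, hg⟩ := dminus_eq_one_iff.1 h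
  refine Finset.sum_eq_single_of_mem f (Finset.mem_filter.2 ⟨Finset.filter_subset _ _ hf, rfl⟩)
    fun e he hef => ?_
  by_contra hxe
  have he_red := hx.mem_redArcs hA ((hx.2.1 e).lt_of_ne' hxe)
  exact hef ((hg e he_red (Finset.mem_filter.1 he).2).trans (hg f hf rfl).symm)

lemma IsFlow.outSum_eq_of_dplus_eq_one [Finite N] (hA : Acyclic A) (hx : IsFlow A s t x)
    {f : N × N} (hf : f ∈ redArcs A s t) (h : dplus A s t f.1 = 1) : outSum A x f.1 = x f := by
  obtain ⟨g, -, -, hg⟩ := dplus_eq_one_iff.1 h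
  refine Finset.sum_eq_single_of_mem f (Finset.mem_filter.2 ⟨Finset.filter_subset _ _ hf, rfl⟩)
    fun e he hef => ?_
  by_contra hxe
  have he_red := hx.mem_redArcs hA ((hx.2.1 e).lt_of_ne' hxe)
  exact hef ((hg e he_red (Finset.mem_filter.1 he).2).trans (hg f hf rfl).symm)

lemma IsFlow.eq_of_dminus_eq_one_of_dplus_eq_one [Finite N] (hA : Acyclic A)
    (hx : IsFlow A s t x) {u v w : N} (huv : (u, v) ∈ redArcs A s t)
    (hvw : (v, w) ∈ redArcs A s t) (hv : dminus A s t v = 1 ∧ dplus A s t v = 1) :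
    x (u, v) = x (v, w) :=
  calc x (u, v) = inSum A x v := (hx.inSum_eq_of_dminus_eq_one hA huv hv.1).symm
    _ = outSum A x v :=
      (hx.2.2.1 v (snd_ne_source_of_mem_redArcs huv) (fst_ne_target_of_mem_redArcs hvw)).symm
    _ = x (v, w) := hx.outSum_eq_of_dplus_eq_one hA hvw hv.2

variable (A s t) in
/-- The face `F_e` of the flow polytope. -/
def arcFace (e : N × N) : Set (N × N → ℝ) :=
  {x ∈ flowPolytope A s t | x e = 0}

lemma isExposed_arcFace (e : N × N) : IsExposed ℝ (flowPolytope A s t) (arcFace A s t e) := by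
  rintro ⟨x₀, hx₀, hx₀e⟩
  refine ⟨-ContinuousLinearMap.proj e, Set.ext fun x =>
    ⟨fun ⟨hx, hxe⟩ => ⟨hx, fun y hy => ?_⟩, fun ⟨hx, hmax⟩ => ⟨hx, ?_⟩⟩⟩
  · simpa [hxe] using hy.2.1 e
  · have := hmax x₀ hx₀
    simp only [neg_apply, ContinuousLinearMap.proj_apply, neg_le_neg_iff, hx₀e] at this
    exact le_antisymm this (hx.2.1 e)

lemma chi_not_mem_arcFace {p : List N} {e : N × N} (he : e ∈ pathEdges p) :
    chi p ∉ arcFace A s t e := fun h => by simpa [chi, he] using h.2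

lemma IsPath.mem_pathEdges_of_arcFace_eq {p : List N} (hp : IsPath A s t p) (hst : s ≠ t)
    {e g : N × N} (h : arcFace A s t e = arcFace A s t g) (he : e ∈ pathEdges p) :
    g ∈ pathEdges p := by
  by_contra hg
  have hchi : chi p ∈ arcFace A s t g := ⟨hp.chi_mem_flowPolytope hst, if_neg hg⟩
  exact chi_not_mem_arcFace he (h ▸ hchi)

lemma arcFace_ne_flowPolytope {e : N × N} (he : e ∈ redArcs A s t) :
    arcFace A s t e ≠ flowPolytope A s t := by
  obtain ⟨-, p, hp, hep⟩ := Finset.mem_filter.1 he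
  intro h
  exact chi_not_mem_arcFace hep
    (h ▸ hp.chi_mem_flowPolytope (source_ne_target_of_mem_redArcs he))

lemma arcFace_subset_arcFace [Finite N] (hA : Acyclic A) {f e : N × N}
    (hf : f ∈ redArcs A s t) (he : e ∈ redArcs A s t) (he₁ : e.1 = f.2)
    (hdeg : dminus A s t f.2 = 1) : arcFace A s t f ⊆ arcFace A s t e := by
  rintro x ⟨hx, hxf⟩
  refine ⟨hx, le_antisymm ?_ (hx.2.1 e)⟩
  calc x e ≤ outSum A x e.1 := hx.le_outSum (Finset.filter_subset _ _ he)
    _ = inSum A x f.2 := by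
      rw [he₁]
      exact hx.2.2.1 _ (snd_ne_source_of_mem_redArcs hf) (he₁ ▸ fst_ne_target_of_mem_redArcs he)
    _ = 0 := by rw [hx.inSum_eq_of_dminus_eq_one hA hf hdeg, hxf]

variable (A s t) in
def IsCorridorSegment (c : List N) : Prop :=
  2 ≤ c.length ∧ c.IsChain (fun u v => (u, v) ∈ redArcs A s t) ∧
    ∀ v ∈ c.tail.dropLast, dminus A s t v = 1 ∧ dplus A s t v = 1

lemma IsCorridor.isCorridorSegment {c : List N} (hc : IsCorridor A s t c) :
    IsCorridorSegment A s t c :=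
  ⟨hc.1, hc.2.1, hc.2.2.1⟩

lemma isCorridorSegment_pair {u v : N} (h : (u, v) ∈ redArcs A s t) :
    IsCorridorSegment A s t [u, v] :=
  ⟨le_rfl, isChain_pair.2 h, by simp⟩

namespace IsCorridorSegment

lemma cons {v w : N} {c : List N} (hc : IsCorridorSegment A s t (w :: c))
    (hvw : (v, w) ∈ redArcs A s t) (hw : dminus A s t w = 1 ∧ dplus A s t w = 1) :
    IsCorridorSegment A s t (v :: w :: c) := by
  obtain ⟨hlen, hchain, hint⟩ := hc
  have hc : c ≠ [] := by rintro rfl; simp at hlen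
  refine ⟨by simp, hchain.cons_cons hvw, fun u hu => ?_⟩
  rw [tail_cons, dropLast_cons_of_ne_nil hc, mem_cons] at hu
  rcases hu with rfl | hu
  · exact hw
  · exact hint u hu

lemma concat {z w : N} {c : List N} (hc : IsCorridorSegment A s t c) (hz : c.getLast? = some z)
    (hzw : (z, w) ∈ redArcs A s t) (hz' : dminus A s t z = 1 ∧ dplus A s t z = 1) :
    IsCorridorSegment A s t (c ++ [w]) := by
  obtain ⟨hlen, hchain, hint⟩ := hc
  refine ⟨by simp; omega, hchain.append (isChain_singleton w) (by simp_all), fun u hu => ?_⟩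
  match c, hlen with
  | a :: b :: c, _ =>
    rw [getLast?_cons_cons] at hz
    rw [cons_append, tail_cons, dropLast_concat, ← dropLast_append_getLast? z hz] at hu
    rcases mem_append.1 hu with hu | hu
    · exact hint u hu
    · rw [mem_singleton.1 hu]; exact hz'

lemma tail {u v w : N} {c : List N} (hc : IsCorridorSegment A s t (u :: v :: w :: c)) :
    IsCorridorSegment A s t (v :: w :: c) ∧ dminus A s t v = 1 ∧ dplus A s t v = 1 := by
  obtain ⟨-, hchain, hint⟩ := hc
  simp only [tail_cons, ne_eq, reduceCtorEq, not_false_eq_true, dropLast_cons_of_ne_nil,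
    mem_cons, forall_eq_or_imp] at hint
  exact ⟨⟨by simp, hchain.tail, fun a ha => hint.2 a (by simpa using ha)⟩, hint.1⟩

lemma nodup (hA : Acyclic A) {c : List N} (hc : IsCorridorSegment A s t c) : c.Nodup :=
  hA.nodup_of_isChain (hc.2.1.imp fun _ _ h => Finset.filter_subset _ _ h)

end IsCorridorSegment

lemma IsFlow.eq_of_mem_pathEdges_of_isCorridorSegment [Finite N] (hA : Acyclic A)
    (hx : IsFlow A s t x) {u v : N} {c : List N} (hc : IsCorridorSegment A s t (u :: v :: c))
    {e : N × N} (he : e ∈ pathEdges (u :: v :: c)) : x e = x (u, v) := by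
  induction c generalizing u v with
  | nil => simp_all
  | cons w c ih =>
    rw [pathEdges_cons_cons, mem_cons] at he
    rcases he with rfl | he
    · rfl
    obtain ⟨hc', hv⟩ := hc.tail
    rw [ih hc' he]
    exact (hx.eq_of_dminus_eq_one_of_dplus_eq_one hA (isChain_cons_cons.1 hc.2.1).1
      (isChain_cons_cons.1 hc'.2.1).1 hv).symm

lemma arcFace_eq_of_isCorridorSegment [Finite N] (hA : Acyclic A) {c : List N}
    (hc : IsCorridorSegment A s t c) {a b : N × N} (ha : a ∈ pathEdges c)
    (hb : b ∈ pathEdges c) : arcFace A s t a = arcFace A s t b := by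
  match c, hc.1 with
  | u :: v :: c, _ =>
    ext x
    refine and_congr_right fun hx => ?_
    rw [hx.eq_of_mem_pathEdges_of_isCorridorSegment hA hc ha,
      hx.eq_of_mem_pathEdges_of_isCorridorSegment hA hc hb]

lemma IsCorridorSegment.isCorridor_or_exists_longer {c : List N}
    (hc : IsCorridorSegment A s t c) : IsCorridor A s t c ∨
      ∃ c', IsCorridorSegment A s t c' ∧ c.length < c'.length ∧
        pathEdges c ⊆ pathEdges c' := by
  cases c with
  | nil => simp [IsCorridorSegment] at hc
  | cons h c =>
  obtain ⟨z, hz⟩ : ∃ z, (h :: c).getLast? = some z :=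
    ⟨_, getLast?_eq_some_getLast (cons_ne_nil _ _)⟩
  by_cases hh : dminus A s t h = 1 ∧ dplus A s t h = 1
  · obtain ⟨⟨u, _⟩, hu, rfl, -⟩ := dminus_eq_one_iff.1 hh.1
    exact Or.inr ⟨_, hc.cons hu hh, by simp, (suffix_cons u _).isInfix.pathEdges_subset⟩
  by_cases hz' : dminus A s t z = 1 ∧ dplus A s t z = 1
  · obtain ⟨⟨_, w⟩, hw, rfl, -⟩ := dplus_eq_one_iff.1 hz'.2
    exact Or.inr
      ⟨_, hc.concat hz hw hz', by simp, (prefix_append _ [w]).isInfix.pathEdges_subset⟩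
  refine Or.inl ⟨hc.1, hc.2.1, hc.2.2, fun h' hh' => ?_, fun z' hz'' => ?_⟩
  · obtain rfl : h = h' := by simpa using hh'
    exact not_and_or.1 hh
  · obtain rfl : z = z' := by simpa [hz] using hz''
    exact not_and_or.1 hz'

lemma IsCorridorSegment.exists_isCorridor [Fintype N] (hA : Acyclic A) {c : List N}
    (hc : IsCorridorSegment A s t c) :
    ∃ c', IsCorridor A s t c' ∧ pathEdges c ⊆ pathEdges c' := by
  induction h : Fintype.card N - c.length using Nat.strong_induction_on generalizing c with
  | _ n ih =>
  rcases hc.isCorridor_or_exists_longer with hc | ⟨c', hc', hlt, hsub⟩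
  · exact ⟨c, hc, Subset.refl _⟩
  · obtain ⟨c'', hc'', hsub'⟩ :=
      ih _ (by have := (hc'.nodup hA).length_le_card; omega) hc' rfl
    exact ⟨c'', hc'', Subset.trans hsub hsub'⟩

lemma dminus_eq_one_of_precedesOn (hA : Acyclic A) (hst : s ≠ t) {p : List N}
    (hp : IsPath A s t p) {f b : N × N} (hfb : PrecedesOn p f b)
    (hface : arcFace A s t f = arcFace A s t b) : dminus A s t f.2 = 1 := by
  obtain ⟨xs, ys, rfl, hb⟩ := hfb
  refine dminus_eq_one_iff.2 ⟨f, hp.mem_redArcs (mem_pathEdges_iff.2 ⟨_, _, rfl⟩), rfl,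
    fun e he he₂ => ?_⟩
  obtain ⟨-, q, hq, heq⟩ := Finset.mem_filter.1 he
  obtain ⟨qs, zs, rfl⟩ := mem_pathEdges_iff.1 heq
  -- Splicing the part of `q` before `e` with the part of `p` after `f` gives a path through `b`.
  have hr : IsPath A s t (qs ++ e.1 :: f.2 :: ys) := by
    refine isPath_append hA (hq.1.prefix ⟨e.2 :: zs, by simp⟩)
      (hp.1.suffix ⟨xs ++ [f.1], by simp⟩) (he₂ ▸ hq.mem_of_mem_pathEdges heq) ?_ ?_
    · rw [← hq.2.1]; cases qs <;> rfl
    · rw [← hp.2.2.1, getLast?_append_of_ne_nil _ (cons_ne_nil _ _), getLast?_cons_cons]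
  have hfr := hr.mem_pathEdges_of_arcFace_eq hst hface.symm
    (IsInfix.pathEdges_subset ⟨qs ++ [e.1], [], by simp⟩ hb)
  exact hr.2.2.2.eq_of_mem_pathEdges_of_snd_eq (mem_pathEdges_iff.2 ⟨qs, ys, by rw [he₂]⟩)
    hfr he₂

lemma arcFace_eq_of_fst_eq [Finite N] (hA : Acyclic A) {f b e : N × N}
    (hFb : IsFacetOf (flowPolytope A s t) (arcFace A s t b)) (hf : f ∈ redArcs A s t)
    (hface : arcFace A s t f = arcFace A s t b) (hdeg : dminus A s t f.2 = 1)
    (he : e ∈ redArcs A s t) (he₁ : e.1 = f.2) : arcFace A s t e = arcFace A s t b :=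
  hFb.2.2 _ (isExposed_arcFace e) (arcFace_ne_flowPolytope he)
    (hface ▸ arcFace_subset_arcFace hA hf he he₁ hdeg)

lemma dplus_eq_one_of_arcFace_eq [Finite N] (hA : Acyclic A) (hst : s ≠ t) {f b g : N × N}
    (hFb : IsFacetOf (flowPolytope A s t) (arcFace A s t b)) (hf : f ∈ redArcs A s t)
    (hface : arcFace A s t f = arcFace A s t b) (hdeg : dminus A s t f.2 = 1)
    (hg : g ∈ redArcs A s t) (hg₁ : g.1 = f.2) : dplus A s t f.2 = 1 := by
  refine dplus_eq_one_iff.2 ⟨g, hg, hg₁, fun e he he₁ => ?_⟩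
  obtain ⟨-, q, hq, heq⟩ := Finset.mem_filter.1 he
  have hgq := hq.mem_pathEdges_of_arcFace_eq hst
    ((arcFace_eq_of_fst_eq hA hFb hf hface hdeg he he₁).trans
      (arcFace_eq_of_fst_eq hA hFb hf hface hdeg hg hg₁).symm) heq
  exact hq.2.2.2.eq_of_mem_pathEdges_of_fst_eq heq hgq (he₁.trans hg₁.symm)

lemma exists_isCorridorSegment_of_precedesOn [Finite N] (hA : Acyclic A) (hst : s ≠ t)
    {p : List N} (hp : IsPath A s t p) {b : N × N}
    (hFb : IsFacetOf (flowPolytope A s t) (arcFace A s t b)) {f : N × N} (hfb : PrecedesOn p f b)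
    (hface : arcFace A s t f = arcFace A s t b) :
    ∃ l, IsCorridorSegment A s t (f.1 :: f.2 :: l) ∧ b ∈ pathEdges (f.2 :: l) := by
  obtain ⟨xs, ys, rfl, hb⟩ := hfb
  induction ys generalizing xs f with
  | nil => simp at hb
  | cons y ys ih =>
    have hf := hp.mem_redArcs (mem_pathEdges_iff.2 ⟨_, _, rfl⟩)
    have hg : (f.2, y) ∈ redArcs A s t :=
      hp.mem_redArcs (mem_pathEdges_iff.2 ⟨xs ++ [f.1], ys, by simp⟩)
    have hdin := dminus_eq_one_of_precedesOn hA hst hp ⟨xs, _, rfl, hb⟩ hface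
    have hdeg := And.intro hdin (dplus_eq_one_of_arcFace_eq hA hst hFb hf hface hdin hg rfl)
    rw [pathEdges_cons_cons, mem_cons] at hb
    rcases hb with rfl | hb
    · exact ⟨[y], (isCorridorSegment_pair hg).cons hf hdeg, by simp⟩
    · obtain ⟨l, hl, hbl⟩ := ih (xs := xs ++ [f.1]) (f := (f.2, y))
        (arcFace_eq_of_fst_eq hA hFb hf hface hdin hg rfl) hb (by simpa using hp)
      exact ⟨y :: l, hl.cons hf hdeg, by simp [hbl]⟩

lemma exists_isCorridorSegment_of_arcFace_eq [Finite N] (hA : Acyclic A) {a b : N × N}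
    (ha : a ∈ redArcs A s t) (hFa : IsFacetOf (flowPolytope A s t) (arcFace A s t a))
    (hFb : IsFacetOf (flowPolytope A s t) (arcFace A s t b))
    (h : arcFace A s t a = arcFace A s t b) :
    ∃ c, IsCorridorSegment A s t c ∧ a ∈ pathEdges c ∧ b ∈ pathEdges c := by
  have hst := source_ne_target_of_mem_redArcs ha
  obtain ⟨-, p, hp, hap⟩ := Finset.mem_filter.1 ha
  rcases precedesOn_or_eq_or_precedesOn hap (hp.mem_pathEdges_of_arcFace_eq hst h hap)
    with hab | rfl | hba
  · obtain ⟨l, hl, hbl⟩ := exists_isCorridorSegment_of_precedesOn hA hst hp hFb hab h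
    exact ⟨_, hl, by simp, by simp [hbl]⟩
  · exact ⟨_, isCorridorSegment_pair ha, by simp, by simp⟩
  · obtain ⟨l, hl, hal⟩ := exists_isCorridorSegment_of_precedesOn hA hst hp hFa hba h.symm
    exact ⟨_, hl, by simp [hal], by simp⟩

end Network

theorem stmt13_general (A : Finset (V × V)) (s t : V) (hA : Acyclic A)
    (a b : V × V) (ha : a ∈ redArcs A s t)
    (hFa : IsFacetOf (flowPolytope A s t) {x ∈ flowPolytope A s t | x a = 0})
    (hFb : IsFacetOf (flowPolytope A s t) {x ∈ flowPolytope A s t | x b = 0}) :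
    ({x ∈ flowPolytope A s t | x a = 0} = {x ∈ flowPolytope A s t | x b = 0}) ↔
      ∃ c : List V, IsCorridor A s t c ∧ a ∈ pathEdges c ∧ b ∈ pathEdges c := by
  constructor
  · intro h
    obtain ⟨c, hc, hac, hbc⟩ := exists_isCorridorSegment_of_arcFace_eq hA ha hFa hFb h
    obtain ⟨c', hc', hsub⟩ := hc.exists_isCorridor hA
    exact ⟨c', hc', hsub hac, hsub hbc⟩
  · rintro ⟨c, hc, hac, hbc⟩
    exact arcFace_eq_of_isCorridorSegment hA hc.isCorridorSegment hac hbc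

/-- If `x(a) ≥ 0` and `x(b) ≥ 0` both define facets of the flow polytope, these facets
coincide iff `a` and `b` belong to the same corridor. -/
theorem stmt13 (A : Finset (V × V)) (s t : V) (hA : Acyclic A)
    (a b : V × V) (ha : a ∈ redArcs A s t) (hb : b ∈ redArcs A s t)
    (hFa : IsFacetOf (flowPolytope A s t) {x ∈ flowPolytope A s t | x a = 0})
    (hFb : IsFacetOf (flowPolytope A s t) {x ∈ flowPolytope A s t | x b = 0}) :
    ({x ∈ flowPolytope A s t | x a = 0} = {x ∈ flowPolytope A s t | x b = 0}) ↔
      ∃ c : List V, IsCorridor A s t c ∧ a ∈ pathEdges c ∧ b ∈ pathEdges c :=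
  stmt13_general A s t hA a b ha hFa hFb
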